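/- arXiv:2305.05547 — 8 statements merged into one kernel-verified Lean document; each statement's English description precedes it below -/
import Mathlib

section
/- Let M = [[A, b],[cᵀ, 0]] be a singular (n+1)×(n+1) matrix where A is invertible with A⁻¹ ≤ 0 and b, c ≤ 0 are vectors in ℝⁿ. Then the group inverse M^# exists, i.e., rank(M²) = rank(M). -/
/-!
Since `det M = -det A · cᵀA⁻¹b = 0` while the block `A` is invertible, `rank M = n`. The
top-left block of `M²` is `A² + b cᵀ`, whose determinant is `det A² · (1 + cᵀA⁻²b)` by the matrix
determinant lemma; the sign conditions make `cᵀA⁻²b ≥ 0`, so this block is invertible and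
`n ≤ rank M² ≤ rank M = n`.
-/

open Matrix

namespace Matrix

variable {m p q R : Type*}

theorem rank_lt_card_of_det_eq_zero {K : Type*} [Field K] [Fintype m] [DecidableEq m]
    {M : Matrix m m K} (h : M.det = 0) : M.rank < Fintype.card m := by
  refine M.rank_le_card_height.lt_of_ne fun hrank => ?_
  have hrange : LinearMap.range M.mulVecLin = ⊤ :=
    Submodule.eq_top_of_finrank_eq (by rw [← rank, hrank, Module.finrank_fintype_fun_eq_card])
  have hunit : IsUnit M := mulVec_surjective_iff_isUnit.1 (LinearMap.range_eq_top.1 hrange)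
  exact ((isUnit_iff_isUnit_det M).1 hunit).ne_zero h

theorem card_le_rank_of_isUnit_det_toBlocks₁₁ [CommRing R] [StrongRankCondition R]
    [Fintype m] [DecidableEq m] [Fintype q] (M : Matrix (m ⊕ p) (m ⊕ q) R)
    (h : IsUnit M.toBlocks₁₁.det) : Fintype.card m ≤ M.rank := by
  rw [← rank_of_isUnit _ ((isUnit_iff_isUnit_det _).2 h)]
  exact M.rank_submatrix_le Sum.inl Sum.inl

theorem mulVec_nonneg_of_nonpos [Fintype p] [CommRing R] [PartialOrder R] [IsOrderedRing R]
    {P : Matrix m p R} (hP : ∀ i j, P i j ≤ 0) {v : p → R} (hv : v ≤ 0) : 0 ≤ P *ᵥ v :=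
  fun i => Finset.sum_nonneg fun j _ => mul_nonneg_of_nonpos_of_nonpos (hP i j) (hv j)

variable [Fintype m] [DecidableEq m] [CommRing R]
  {ι : Type*} [Unique ι] [Fintype ι] [DecidableEq ι]

theorem det_add_replicateCol_mul_replicateRow_eq {A : Matrix m m R} (hA : IsUnit A.det)
    (u v : m → R) :
    (A + replicateCol ι u * replicateRow ι v).det = A.det * (1 + v ⬝ᵥ A⁻¹ *ᵥ u) := by
  rw [det_add_mul _ _ hA, Matrix.mul_assoc, ← replicateCol_mulVec, det_unique (n := ι)]
  simp [replicateRow_mul_replicateCol_apply]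

theorem det_fromBlocks_replicateCol_replicateRow_zero {A : Matrix m m R} (hA : IsUnit A.det)
    (u v : m → R) :
    (fromBlocks A (replicateCol ι u) (replicateRow ι v) 0).det = -(A.det * (v ⬝ᵥ A⁻¹ *ᵥ u)) := by
  let _ := A.invertibleOfIsUnitDet hA
  rw [det_fromBlocks₁₁, invOf_eq_nonsing_inv, Matrix.mul_assoc, ← replicateCol_mulVec,
    det_unique (n := ι)]
  simp [replicateRow_mul_replicateCol_apply]

end Matrix

/-- For a singular `M = [[A, b],[cᵀ, 0]]` with `A` invertible, `A⁻¹ ≤ 0`, `b, c ≤ 0`,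
the group inverse of `M` exists, i.e. `rank (M²) = rank M`. -/
theorem stmt_2 (n : ℕ) (A : Matrix (Fin n) (Fin n) ℝ)
    (hAinv : IsUnit A.det)
    (hAneg : ∀ i j, A⁻¹ i j ≤ 0)
    (b c : Fin n → ℝ) (hb : ∀ i, b i ≤ 0) (hc : ∀ i, c i ≤ 0)
    (M : Matrix (Fin n ⊕ Fin 1) (Fin n ⊕ Fin 1) ℝ)
    (hM : M = Matrix.fromBlocks A (fun i _ => b i) (fun _ j => c j) 0)
    (hsing : c ⬝ᵥ (A⁻¹ *ᵥ b) = 0) :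
    (M * M).rank = M.rank := by
  change M = fromBlocks A (replicateCol (Fin 1) b) (replicateRow (Fin 1) c) 0 at hM
  have hrank_le : M.rank ≤ n := by
    have hdet : M.det = 0 := by
      rw [hM, det_fromBlocks_replicateCol_replicateRow_zero hAinv, hsing, mul_zero, neg_zero]
    simpa using rank_lt_card_of_det_eq_zero hdet
  have hsq_block :
      (M * M).toBlocks₁₁ = A * A + replicateCol (Fin 1) b * replicateRow (Fin 1) c := by
    rw [hM, fromBlocks_multiply, toBlocks_fromBlocks₁₁]
  have hAA : IsUnit (A * A).det := by rw [det_mul]; exact hAinv.mul hAinv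
  -- `cᵀ A⁻² b = (A⁻ᵀ c) ⬝ (A⁻¹ b)` is a product of two nonnegative vectors.
  have hquad : 0 ≤ c ⬝ᵥ (A * A)⁻¹ *ᵥ b := by
    rw [Matrix.mul_inv_rev, ← mulVec_mulVec, dotProduct_mulVec, ← mulVec_transpose]
    exact dotProduct_nonneg_of_nonneg (mulVec_nonneg_of_nonpos (fun i j => hAneg j i) hc)
      (mulVec_nonneg_of_nonpos hAneg hb)
  have hrank_ge : n ≤ (M * M).rank := by
    simpa using (M * M).card_le_rank_of_isUnit_det_toBlocks₁₁ <| by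
      rw [hsq_block, det_add_replicateCol_mul_replicateRow_eq hAA]
      exact hAA.mul (isUnit_iff_ne_zero.2 (by positivity))
  have := rank_mul_le_left M M
  omega
end

section
/- Let M = [[A, b],[0, 0]] be an (n+1)×(n+1) matrix where A is invertible with A⁻¹ ≤ 0 entrywise and b ∈ ℝⁿ is nonpositive. Then the group inverse of M equals the block matrix [[A⁻¹, A⁻²b],[0, 0]], and this matrix is entrywise nonpositive. -/
open Matrix

/-!
Both products `M X` and `X M` equal the idempotent `P = [[1, A⁻¹b],[0, 0]]`, and `P` acts as the
identity from the left on every block matrix with zero bottom row, in particular on `M` and `X`.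
Nonpositivity of `A⁻²b` holds because `A⁻² = A⁻¹A⁻¹` is a product of two nonpositive matrices,
hence nonnegative.
-/

def IsGroupInverse {ι R : Type*} [Fintype ι] [Semiring R] (M X : Matrix ι ι R) : Prop :=
  M * X * M = M ∧ X * M * X = X ∧ M * X = X * M

namespace Matrix

variable {m p R : Type*} [Fintype m] [Fintype p]

theorem fromBlocks_one_zero_zero_mul [DecidableEq m] [Semiring R] (C D : Matrix m p R)
    (E : Matrix m m R) :
    fromBlocks 1 C 0 0 * fromBlocks E D 0 0 = fromBlocks E D (0 : Matrix p m R) 0 := by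
  simp [fromBlocks_multiply]

section Inverse

variable [DecidableEq m] [CommRing R] {A : Matrix m m R} (hA : IsUnit A.det) (B : Matrix m p R)
include hA

theorem fromBlocks_mul_fromBlocks_inv :
    fromBlocks A B 0 0 * fromBlocks A⁻¹ (A⁻¹ * A⁻¹ * B) 0 0
      = fromBlocks 1 (A⁻¹ * B) (0 : Matrix p m R) 0 := by
  simp [fromBlocks_multiply, ← Matrix.mul_assoc, mul_nonsing_inv A hA]

theorem fromBlocks_inv_mul_fromBlocks :
    fromBlocks A⁻¹ (A⁻¹ * A⁻¹ * B) 0 0 * fromBlocks A B 0 0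
      = fromBlocks 1 (A⁻¹ * B) (0 : Matrix p m R) 0 := by
  simp [fromBlocks_multiply, nonsing_inv_mul A hA]

theorem isGroupInverse_fromBlocks :
    IsGroupInverse (fromBlocks A B 0 0) (fromBlocks A⁻¹ (A⁻¹ * A⁻¹ * B) 0 0) := by
  refine ⟨?_, ?_, ?_⟩
  · rw [fromBlocks_mul_fromBlocks_inv hA, fromBlocks_one_zero_zero_mul]
  · rw [fromBlocks_inv_mul_fromBlocks hA, fromBlocks_one_zero_zero_mul]
  · rw [fromBlocks_mul_fromBlocks_inv hA, fromBlocks_inv_mul_fromBlocks hA]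

end Inverse

section Sign

variable [Ring R] [PartialOrder R] [IsOrderedRing R]

theorem mul_apply_nonneg_of_nonpos {l n : Type*} {P : Matrix l m R} {Q : Matrix m n R}
    (hP : ∀ i j, P i j ≤ 0) (hQ : ∀ i j, Q i j ≤ 0) (i : l) (j : n) : 0 ≤ (P * Q) i j :=
  Finset.sum_nonneg fun k _ => mul_nonneg_of_nonpos_of_nonpos (hP i k) (hQ k j)

theorem mulVec_apply_nonpos_of_nonneg {l : Type*} {P : Matrix l m R} {v : m → R}
    (hP : ∀ i j, 0 ≤ P i j) (hv : ∀ i, v i ≤ 0) (i : l) : (P *ᵥ v) i ≤ 0 :=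
  Finset.sum_nonpos fun k _ => mul_nonpos_of_nonneg_of_nonpos (hP i k) (hv k)

end Sign

end Matrix

/-- For `M = [[A, b],[0, 0]]` with `A` invertible, `A⁻¹ ≤ 0`, `b ≤ 0`, the group
inverse of `M` equals `[[A⁻¹, A⁻²b],[0, 0]]`, which is entrywise nonpositive. -/
theorem stmt_3 (n : ℕ) (A : Matrix (Fin n) (Fin n) ℝ)
    (hAinv : IsUnit A.det)
    (hAneg : ∀ i j, A⁻¹ i j ≤ 0)
    (b : Fin n → ℝ) (hb : ∀ i, b i ≤ 0)
    (M X : Matrix (Fin n ⊕ Fin 1) (Fin n ⊕ Fin 1) ℝ)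
    (hM : M = Matrix.fromBlocks A (fun i _ => b i) 0 0)
    (hX : X = Matrix.fromBlocks A⁻¹ (fun i _ => ((A⁻¹ * A⁻¹) *ᵥ b) i) 0 0) :
    M * X * M = M ∧ X * M * X = X ∧ M * X = X * M ∧ ∀ i j, X i j ≤ 0 := by
  have hXcol : X = fromBlocks A⁻¹ (A⁻¹ * A⁻¹ * replicateCol (Fin 1) b) 0 0 := by
    rw [hX, ← replicateCol_mulVec]
    rfl
  have hgroup : IsGroupInverse M X := by
    rw [hM, hXcol]
    exact isGroupInverse_fromBlocks hAinv (replicateCol (Fin 1) b)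
  refine ⟨hgroup.1, hgroup.2.1, hgroup.2.2, ?_⟩
  have hAsq : ∀ i j, 0 ≤ (A⁻¹ * A⁻¹) i j := mul_apply_nonneg_of_nonpos hAneg hAneg
  rw [hX]
  rintro (i | i) (j | j)
  · exact hAneg i j
  · exact mulVec_apply_nonpos_of_nonneg hAsq hb i
  · exact le_rfl
  · exact le_rfl
end

section
/- Every 3×3 singular irreducible F₀-matrix M with an irreducibility assumption and block form M = [[A, b],[cᵀ, 0]] (A a 2×2 N₀-matrix, b, c ≤ 0, cᵀA⁻¹b = 0) has entrywise nonpositive group inverse M^#. -/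
/-!
The sign pattern forces `M` to be a star: its nonzero entries lie in one row and the matching
column. As `A⁻¹ 0 1 = -A 0 1 / det A ≤ 0` with `A 0 1 < 0`, we get `det A < 0`, so
`adj A = det A • A⁻¹` is entrywise nonnegative with positive off-diagonal entries. Hence
`cᵀ (adj A) b = 0` is a sum of nonnegative terms `c i * adj A i j * b j`, which all vanish. Since
irreducibility forces `b ≠ 0` and `c ≠ 0`, there is an index `k` with `b k, c k < 0` such that
`b`, `c` and `A l l` vanish at the other index `l`.

A star `M = a e eᵀ + e uᵀ + v eᵀ` (with `e` the `o`-th unit vector and `u o = v o = 0`) has the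
explicit group inverse `(e uᵀ + v eᵀ) / s - (a / s²) v uᵀ` with `s = u ⬝ᵥ v`, which is
nonpositive as soon as `a ≥ 0`, `u, v ≤ 0` and `s > 0`.
-/

open Matrix

namespace Matrix

variable {n K : Type*}

def IsGroupInverse [Fintype n] [Semiring K] (M X : Matrix n n K) : Prop :=
  M * X * M = M ∧ X * M * X = X ∧ M * X = X * M

section Star

variable [DecidableEq n] [Field K]

def starMatrix (o : n) (a : K) (u v : n → K) : Matrix n n K :=
  a • vecMulVec (Pi.single o 1) (Pi.single o 1) + vecMulVec (Pi.single o 1) u +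
    vecMulVec v (Pi.single o 1)

def starGroupInverse [Fintype n] (o : n) (a : K) (u v : n → K) : Matrix n n K :=
  (u ⬝ᵥ v)⁻¹ • (vecMulVec (Pi.single o 1) u + vecMulVec v (Pi.single o 1)) -
    (a / (u ⬝ᵥ v) ^ 2) • vecMulVec v u

theorem eq_starMatrix {M : Matrix n n K} {o : n} (hM : ∀ i j, i ≠ o → j ≠ o → M i j = 0) :
    M = starMatrix o (M o o) (Function.update (M o) o 0) (Function.update (Mᵀ o) o 0) := by
  ext i j
  by_cases hi : i = o <;> by_cases hj : j = o <;>
    simp [starMatrix, vecMulVec_apply, hi, hj, hM i j]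

variable [Fintype n]

theorem isGroupInverse_starGroupInverse {o : n} {a : K} {u v : n → K} (hu : u o = 0)
    (hv : v o = 0) (hs : u ⬝ᵥ v ≠ 0) :
    IsGroupInverse (starMatrix o a u v) (starGroupInverse o a u v) := by
  have hee : Pi.single o (1 : K) ⬝ᵥ Pi.single o 1 = 1 := by simp
  have hue : u ⬝ᵥ Pi.single o 1 = 0 := by simp [hu]
  have hev : Pi.single o 1 ⬝ᵥ v = 0 := by simp [hv]
  unfold IsGroupInverse starMatrix starGroupInverse
  simp only [add_mul, mul_add, sub_mul, mul_sub, smul_mul_assoc, mul_smul_comm,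
    vecMulVec_mul_vecMulVec, hee, hue, hev, vecMulVec_smul, smul_smul, smul_add, smul_sub,
    zero_smul, vecMulVec_zero, smul_zero, one_smul, add_zero, zero_add, sub_zero]
  generalize u ⬝ᵥ v = s at hs ⊢
  refine ⟨?_, ?_, ?_⟩ <;> match_scalars <;> field_simp <;> ring

variable [LinearOrder K] [IsStrictOrderedRing K]

theorem starGroupInverse_nonpos {o : n} {a : K} {u v : n → K} (ha : 0 ≤ a) (hu : ∀ j, u j ≤ 0)
    (hv : ∀ i, v i ≤ 0) (hs : 0 < u ⬝ᵥ v) (i j : n) : starGroupInverse o a u v i j ≤ 0 := by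
  have he (k : n) : 0 ≤ (Pi.single o 1 : n → K) k := by
    rw [Pi.single_apply]; split_ifs <;> norm_num
  have hlin : (Pi.single o 1 : n → K) i * u j + v i * (Pi.single o 1 : n → K) j ≤ 0 :=
    add_nonpos (mul_nonpos_of_nonneg_of_nonpos (he i) (hu j))
      (mul_nonpos_of_nonpos_of_nonneg (hv i) (he j))
  have hquad : 0 ≤ a / (u ⬝ᵥ v) ^ 2 * (v i * u j) :=
    mul_nonneg (by positivity) (mul_nonneg_of_nonpos_of_nonpos (hv i) (hu j))
  simp only [starGroupInverse, sub_apply, smul_apply, add_apply, vecMulVec_apply, smul_eq_mul]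
  exact sub_nonpos.2 ((mul_nonpos_of_nonneg_of_nonpos (inv_nonneg.2 hs.le) hlin).trans hquad)

theorem exists_isGroupInverse_nonpos_of_star {M : Matrix n n K} (o : n)
    (hM : ∀ i j, i ≠ o → j ≠ o → M i j = 0) (hZ : ∀ i j, i ≠ j → M i j ≤ 0) (hoo : 0 ≤ M o o)
    (hpos : ∃ i, i ≠ o ∧ M o i * M i o ≠ 0) :
    ∃ X, IsGroupInverse M X ∧ ∀ i j, X i j ≤ 0 := by
  set u := Function.update (M o) o 0
  set v := Function.update (Mᵀ o) o 0
  have hu : ∀ j, u j ≤ 0 := fun j => by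
    by_cases hj : j = o
    · simp [u, hj]
    · simpa [u, hj] using hZ o j (Ne.symm hj)
  have hv : ∀ i, v i ≤ 0 := fun i => by
    by_cases hi : i = o
    · simp [v, hi]
    · simpa [v, hi] using hZ i o hi
  have hs : 0 < u ⬝ᵥ v := by
    obtain ⟨i, hio, hi⟩ := hpos
    refine Finset.sum_pos' (fun j _ => mul_nonneg_of_nonpos_of_nonpos (hu j) (hv j))
      ⟨i, Finset.mem_univ i, ?_⟩
    simpa [u, v, hio] using lt_of_le_of_ne
      (mul_nonneg_of_nonpos_of_nonpos (hZ o i hio.symm) (hZ i o hio)) hi.symm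
  rw [eq_starMatrix hM]
  exact ⟨_, isGroupInverse_starGroupInverse (by simp) (by simp) hs.ne',
    starGroupInverse_nonpos hoo hu hv hs⟩

end Star

section Adjugate

variable [Fintype n] [DecidableEq n] [Field K]

theorem adjugate_apply_eq_det_mul_inv {A : Matrix n n K} (hA : IsUnit A.det) (i j : n) :
    adjugate A i j = A.det * A⁻¹ i j := by
  rw [inv_def, Ring.inverse_eq_inv, smul_apply, smul_eq_mul, ← mul_assoc,
    mul_inv_cancel₀ hA.ne_zero, one_mul]

theorem dotProduct_adjugate_mulVec_eq_zero {A : Matrix n n K} (hA : IsUnit A.det) {x y : n → K}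
    (h : x ⬝ᵥ A⁻¹ *ᵥ y = 0) : x ⬝ᵥ adjugate A *ᵥ y = 0 := by
  rw [inv_def, Ring.inverse_eq_inv, smul_mulVec, dotProduct_smul, smul_eq_mul] at h
  exact (mul_eq_zero.1 h).resolve_left (inv_ne_zero hA.ne_zero)

variable [LinearOrder K] [IsStrictOrderedRing K]

theorem det_neg_of_inv_nonpos {A : Matrix n n K} (hA : IsUnit A.det) (hinv : ∀ i j, A⁻¹ i j ≤ 0)
    {i j : n} (hij : 0 < adjugate A i j) : A.det < 0 := by
  rw [adjugate_apply_eq_det_mul_inv hA] at hij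
  exact neg_of_mul_pos_left hij (hinv i j)

theorem adjugate_nonneg_of_inv_nonpos {A : Matrix n n K} (hA : IsUnit A.det)
    (hinv : ∀ i j, A⁻¹ i j ≤ 0) (hdet : A.det < 0) (i j : n) : 0 ≤ adjugate A i j := by
  rw [adjugate_apply_eq_det_mul_inv hA]
  exact mul_nonneg_of_nonpos_of_nonpos hdet.le (hinv i j)

end Adjugate

theorem adjugate_fin_two_apply_of_ne {R : Type*} [CommRing R] (A : Matrix (Fin 2) (Fin 2) R)
    {i j : Fin 2} (h : i ≠ j) : adjugate A i j = -A i j := by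
  fin_cases i <;> fin_cases j <;> simp_all [adjugate_fin_two]

theorem adjugate_fin_two_apply_self_of_ne {R : Type*} [CommRing R] (A : Matrix (Fin 2) (Fin 2) R)
    {i j : Fin 2} (h : i ≠ j) : adjugate A i i = A j j := by
  fin_cases i <;> fin_cases j <;> simp_all [adjugate_fin_two]

theorem mul_mul_eq_zero_of_dotProduct_mulVec_eq_zero [Fintype n] [Field K] [LinearOrder K]
    [IsStrictOrderedRing K] {P : Matrix n n K} {x y : n → K} (hP : ∀ i j, 0 ≤ P i j)
    (hx : ∀ i, x i ≤ 0) (hy : ∀ j, y j ≤ 0) (h : x ⬝ᵥ P *ᵥ y = 0) (i j : n) :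
    x i * P i j * y j = 0 := by
  have hterm : ∀ i j, 0 ≤ x i * P i j * y j := fun i j =>
    mul_nonneg_of_nonpos_of_nonpos (mul_nonpos_of_nonpos_of_nonneg (hx i) (hP i j)) (hy j)
  have hsum : ∑ i, ∑ j, x i * P i j * y j = 0 := by
    simpa [dotProduct, mulVec, Finset.mul_sum, mul_assoc] using h
  rw [Finset.sum_eq_zero_iff_of_nonneg fun i _ => Finset.sum_nonneg fun j _ => hterm i j] at hsum
  exact (Finset.sum_eq_zero_iff_of_nonneg fun j _ => hterm i j).1 (hsum i (Finset.mem_univ i)) j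
    (Finset.mem_univ j)

theorem exists_common_support_of_mul_mul_eq_zero {R : Type*} [MulZeroClass R]
    [NoZeroDivisors R] {P : Matrix n n R} {x y : n → R} (hP : ∀ i j, i ≠ j → P i j ≠ 0)
    (h : ∀ i j, x i * P i j * y j = 0) (hx : x ≠ 0) (hy : y ≠ 0) :
    ∃ k, x k ≠ 0 ∧ y k ≠ 0 ∧ P k k = 0 ∧ ∀ l ≠ k, x l = 0 ∧ y l = 0 := by
  obtain ⟨k, hyk⟩ : ∃ k, y k ≠ 0 := Function.ne_iff.1 hy
  have hx_off : ∀ l ≠ k, x l = 0 := fun l hl => by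
    simpa [hP l k hl, hyk] using h l k
  have hxk : x k ≠ 0 := fun hxk => hx (funext fun l => by
    by_cases hl : l = k
    · simpa [hl] using hxk
    · exact hx_off l hl)
  have hy_off : ∀ l ≠ k, y l = 0 := fun l hl => by
    simpa [hP k l (Ne.symm hl), hxk] using h k l
  exact ⟨k, hxk, hyk, by simpa [hxk, hyk] using h k k, fun l hl => ⟨hx_off l hl, hy_off l hl⟩⟩

theorem ne_zero_of_irreducible_fromBlocks {m p R : Type*} [Zero R] [Nonempty m] [Nonempty p]
    {A : Matrix m m R} {B : Matrix m p R} {C : Matrix p m R} {D : Matrix p p R}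
    (hirr : ∀ S : Set (m ⊕ p), S.Nonempty → S ≠ Set.univ →
      ∃ i ∈ S, ∃ j ∉ S, fromBlocks A B C D i j ≠ 0) :
    B ≠ 0 ∧ C ≠ 0 := by
  constructor
  · obtain ⟨_, ⟨i, rfl⟩, j, hj, hij⟩ := hirr (Set.range Sum.inl) (Set.range_nonempty _)
      fun h => by simpa using Set.eq_univ_iff_forall.1 h (Sum.inr (Classical.arbitrary p))
    rcases j with j | j
    · exact absurd ⟨j, rfl⟩ hj
    · rintro rfl
      simp at hij
  · obtain ⟨_, ⟨i, rfl⟩, j, hj, hij⟩ := hirr (Set.range Sum.inr) (Set.range_nonempty _)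
      fun h => by simpa using Set.eq_univ_iff_forall.1 h (Sum.inl (Classical.arbitrary m))
    rcases j with j | j
    · rintro rfl
      simp at hij
    · exact absurd ⟨j, rfl⟩ hj

theorem fromBlocks_col_row_apply_nonpos_of_ne {m R : Type*} [Zero R] [Preorder R]
    {A : Matrix m m R} {b c : m → R} (hA : ∀ i j, i ≠ j → A i j ≤ 0) (hb : ∀ i, b i ≤ 0)
    (hc : ∀ i, c i ≤ 0) :
    ∀ i j, i ≠ j →
      fromBlocks A (fun i _ => b i) (fun _ j => c j) (0 : Matrix (Fin 1) (Fin 1) R) i j ≤ 0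
  | .inl i, .inl j, hij => hA i j (by simpa using hij)
  | .inl i, .inr _, _ => hb i
  | .inr _, .inl j, _ => hc j
  | .inr _, .inr _, _ => le_rfl

theorem fromBlocks_col_row_apply_eq_zero_of_ne_inl {R : Type*} [Zero R]
    {A : Matrix (Fin 2) (Fin 2) R} {b c : Fin 2 → R} {k : Fin 2}
    (hA : ∀ l ≠ k, A l l = 0) (hb : ∀ l ≠ k, b l = 0) (hc : ∀ l ≠ k, c l = 0) :
    ∀ i j, i ≠ .inl k → j ≠ .inl k →
      fromBlocks A (fun i _ => b i) (fun _ j => c j) (0 : Matrix (Fin 1) (Fin 1) R) i j = 0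
  | .inl i, .inl j, hi, hj => by
    obtain rfl : i = j := by simp at hi hj; omega
    exact hA i (by simpa using hi)
  | .inl i, .inr _, hi, _ => hb i (by simpa using hi)
  | .inr _, .inl j, _, hj => hc j (by simpa using hj)
  | .inr _, .inr _, _, _ => rfl

end Matrix

/-- A singular irreducible 3×3 F₀-matrix `M = [[A, b],[cᵀ, 0]]` (with `A` a 2×2
N₀-matrix, `b, c ≤ 0`, `cᵀA⁻¹b = 0`) has an entrywise nonpositive group inverse. -/
theorem stmt_6 (A : Matrix (Fin 2) (Fin 2) ℝ)
    (hAZ : ∀ i j, i ≠ j → A i j ≤ 0)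
    (hAinv : IsUnit A.det)
    (hAneg : ∀ i j, A⁻¹ i j ≤ 0)
    (hAirr : A 0 1 ≠ 0 ∧ A 1 0 ≠ 0)
    (b c : Fin 2 → ℝ) (hb : ∀ i, b i ≤ 0) (hc : ∀ i, c i ≤ 0)
    (M : Matrix (Fin 2 ⊕ Fin 1) (Fin 2 ⊕ Fin 1) ℝ)
    (hM : M = Matrix.fromBlocks A (fun i _ => b i) (fun _ j => c j) 0)
    (hsing : c ⬝ᵥ (A⁻¹ *ᵥ b) = 0)
    (hirr : ∀ S : Set (Fin 2 ⊕ Fin 1), S.Nonempty → S ≠ Set.univ →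
      ∃ i ∈ S, ∃ j ∉ S, M i j ≠ 0) :
    ∃ X : Matrix (Fin 2 ⊕ Fin 1) (Fin 2 ⊕ Fin 1) ℝ,
      M * X * M = M ∧ X * M * X = X ∧ M * X = X * M ∧ ∀ i j, X i j ≤ 0 := by
  have hAoff : ∀ i j, i ≠ j → A i j < 0 := fun i j hij =>
    (hAZ i j hij).lt_of_ne (by fin_cases i <;> fin_cases j <;> simp_all)
  have hadj_off : ∀ i j, i ≠ j → 0 < adjugate A i j := fun i j hij => by
    simpa [adjugate_fin_two_apply_of_ne A hij] using hAoff i j hij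
  have hadj := adjugate_nonneg_of_inv_nonpos hAinv hAneg
    (det_neg_of_inv_nonpos hAinv hAneg (hadj_off 0 1 zero_ne_one))
  obtain ⟨hB, hC⟩ := ne_zero_of_irreducible_fromBlocks (hM ▸ hirr)
  obtain ⟨k, hck, hbk, hkk, hrest⟩ := exists_common_support_of_mul_mul_eq_zero
    (fun i j hij => (hadj_off i j hij).ne')
    (mul_mul_eq_zero_of_dotProduct_mulVec_eq_zero hadj hc hb
      (dotProduct_adjugate_mulVec_eq_zero hAinv hsing))
    (fun h => hC (by ext; simp [h])) (fun h => hB (by ext; simp [h]))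
  obtain ⟨l, hlk⟩ := exists_ne k
  obtain ⟨X, ⟨hMXM, hXMX, hcomm⟩, hX⟩ := exists_isGroupInverse_nonpos_of_star (Sum.inl k)
    (hM ▸ fromBlocks_col_row_apply_eq_zero_of_ne_inl
      (fun l hl => by rwa [adjugate_fin_two_apply_self_of_ne A hl.symm] at hkk)
      (fun l hl => (hrest l hl).2) (fun l hl => (hrest l hl).1))
    (hM ▸ fromBlocks_col_row_apply_nonpos_of_ne hAZ hb hc)
    (by simpa [hM, fromBlocks, adjugate_fin_two_apply_self_of_ne A hlk] using hadj l l)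
    ⟨Sum.inr 0, Sum.inr_ne_inl, by simpa [hM, fromBlocks] using mul_ne_zero hbk hck⟩
  exact ⟨X, hMXM, hXMX, hcomm, hX⟩
end

section
/- Let M = [[A, b],[cᵀ, 0]] where A is an invertible Z-matrix with A⁻¹ ≤ 0 and b, c ∈ ℝⁿ are nonpositive with b ≠ 0. Then M is an R₀-matrix: the only x ∈ ℝⁿ⁺¹ with x ≥ 0 and Mx ≥ 0 and xᵀMx = 0 is x = 0. In fact x ≥ 0 and Mx ≥ 0 already force x = 0. -/
/-!
Write `x = (u, t)` with `u ∈ ℝⁿ`, `t ∈ ℝ`. The first block row of `Mx ≥ 0` reads `A u + b t ≥ 0`,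
and `b t ≤ 0`, so `A u ≥ 0`; as `A⁻¹ ≤ 0`, this gives `u = A⁻¹ (A u) ≤ 0`, hence `u = 0`. Then
`0 ≤ b t ≤ 0`, and `b ≠ 0` forces `t = 0`.
-/

open Matrix

namespace Matrix

variable {R ι κ : Type*} [Fintype κ]

theorem mulVec_nonpos_of_nonpos_of_nonneg [Semiring R] [PartialOrder R] [IsOrderedRing R]
    {B : Matrix ι κ R} (hB : ∀ i j, B i j ≤ 0) {t : κ → R} (ht : 0 ≤ t) : B *ᵥ t ≤ 0 :=
  fun i => (dotProduct_le_dotProduct_of_nonneg_right (show B i ≤ 0 from hB i) ht).trans_eq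
    (zero_dotProduct t)

variable [Fintype ι] [CommRing R] [PartialOrder R] [IsOrderedRing R]

theorem nonpos_of_mulVec_nonneg_of_inv_nonpos [DecidableEq ι] {A : Matrix ι ι R}
    (hA : IsUnit A.det) (hAinv : ∀ i j, A⁻¹ i j ≤ 0) {u : ι → R} (hu : 0 ≤ A *ᵥ u) : u ≤ 0 := by
  rw [← one_mulVec u, ← nonsing_inv_mul A hA, ← mulVec_mulVec]
  exact mulVec_nonpos_of_nonpos_of_nonneg hAinv hu

theorem eq_zero_and_mulVec_eq_zero_of_mulVec_add_mulVec_nonneg [DecidableEq ι]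
    {A : Matrix ι ι R} (hA : IsUnit A.det) (hAinv : ∀ i j, A⁻¹ i j ≤ 0)
    {B : Matrix ι κ R} (hB : ∀ i j, B i j ≤ 0) {u : ι → R} {t : κ → R}
    (hu : 0 ≤ u) (ht : 0 ≤ t)
    (h : 0 ≤ A *ᵥ u + B *ᵥ t) : u = 0 ∧ B *ᵥ t = 0 := by
  have hBt : B *ᵥ t ≤ 0 := mulVec_nonpos_of_nonpos_of_nonneg hB ht
  have hAu : 0 ≤ A *ᵥ u := h.trans (add_le_of_nonpos_right hBt)
  have hu0 : u = 0 := le_antisymm (nonpos_of_mulVec_nonneg_of_inv_nonpos hA hAinv hAu) hu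
  refine ⟨hu0, le_antisymm hBt ?_⟩
  simpa [hu0] using h

end Matrix

theorem stmt_9_general (n : ℕ) (A : Matrix (Fin n) (Fin n) ℝ)
    (hAinv : IsUnit A.det)
    (hAneg : ∀ i j, A⁻¹ i j ≤ 0)
    (b c : Fin n → ℝ) (hb : ∀ i, b i ≤ 0) (hbne : b ≠ 0)
    (M : Matrix (Fin n ⊕ Fin 1) (Fin n ⊕ Fin 1) ℝ)
    (hM : M = Matrix.fromBlocks A (fun i _ => b i) (fun _ j => c j) 0) :
    (∀ x : Fin n ⊕ Fin 1 → ℝ, (∀ i, 0 ≤ x i) → (∀ i, 0 ≤ (M *ᵥ x) i) →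
      x ⬝ᵥ (M *ᵥ x) = 0 → x = 0) ∧
    (∀ x : Fin n ⊕ Fin 1 → ℝ, (∀ i, 0 ≤ x i) → (∀ i, 0 ≤ (M *ᵥ x) i) → x = 0) := by
  have key : ∀ x : Fin n ⊕ Fin 1 → ℝ, (∀ i, 0 ≤ x i) → (∀ i, 0 ≤ (M *ᵥ x) i) → x = 0 := by
    intro x hx hMx
    have hrow :
        0 ≤ A *ᵥ (x ∘ Sum.inl) + (fun i _ => b i : Matrix _ (Fin 1) ℝ) *ᵥ (x ∘ Sum.inr) :=
      fun i => by
        simpa [hM, mulVec, dotProduct, Fintype.sum_sum_type, fromBlocks] using hMx (Sum.inl i)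
    obtain ⟨hu, hbt⟩ := eq_zero_and_mulVec_eq_zero_of_mulVec_add_mulVec_nonneg hAinv hAneg
      (fun i _ => hb i) (fun _ => hx _) (fun _ => hx _) hrow
    obtain ⟨j, hj⟩ := Function.ne_iff.1 hbne
    have ht : x (Sum.inr 0) = 0 :=
      (mul_eq_zero.1 (by simpa [mulVec, dotProduct] using congrFun hbt j)).resolve_left hj
    ext (i | i)
    · exact congrFun hu i
    · rwa [Subsingleton.elim i 0]
  exact ⟨fun x hx hMx _ => key x hx hMx, key⟩

/-- For `M = [[A, b],[cᵀ, 0]]` with `A` an invertible Z-matrix, `A⁻¹ ≤ 0`,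
`b, c ≤ 0`, `b ≠ 0`: `M` is an R₀-matrix; in fact `x ≥ 0` and `Mx ≥ 0`
already force `x = 0`. -/
theorem stmt_9 (n : ℕ) (A : Matrix (Fin n) (Fin n) ℝ)
    (hAZ : ∀ i j, i ≠ j → A i j ≤ 0)
    (hAinv : IsUnit A.det)
    (hAneg : ∀ i j, A⁻¹ i j ≤ 0)
    (b c : Fin n → ℝ) (hb : ∀ i, b i ≤ 0) (hc : ∀ i, c i ≤ 0) (hbne : b ≠ 0)
    (M : Matrix (Fin n ⊕ Fin 1) (Fin n ⊕ Fin 1) ℝ)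
    (hM : M = Matrix.fromBlocks A (fun i _ => b i) (fun _ j => c j) 0) :
    (∀ x : Fin n ⊕ Fin 1 → ℝ, (∀ i, 0 ≤ x i) → (∀ i, 0 ≤ (M *ᵥ x) i) →
      x ⬝ᵥ (M *ᵥ x) = 0 → x = 0) ∧
    (∀ x : Fin n ⊕ Fin 1 → ℝ, (∀ i, 0 ≤ x i) → (∀ i, 0 ≤ (M *ᵥ x) i) → x = 0) :=
  stmt_9_general n A hAinv hAneg b c hb hbne M hM
end

section
/- Let M = [[A, b],[cᵀ, 0]] where A is invertible with A⁻¹ ≤ 0 entrywise, b, c ≤ 0, and suppose there exists a nonzero y = (w, λ) ≥ 0 in ℝⁿ⁺¹ with −Mᵀy ≤ 0. Then c = 0. -/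
open Matrix

/-! The inequality `Mᵀ y ≥ 0` in the first `n` coordinates reads `wᵀA + λ cᵀ ≥ 0`; since `λ c ≤ 0`
this forces `wᵀA ≥ 0`, and then `wᵀ = (wᵀA) A⁻¹ ≤ 0` because `A⁻¹ ≤ 0`. Together with `w ≥ 0` this
gives `w = 0`, so `λ > 0` as `y ≠ 0`, and `λ c ≥ 0` yields `c ≥ 0`, i.e. `c = 0`. -/

theorem Matrix.nonpos_of_vecMul_nonneg_of_inv_nonpos {n 𝕜 : Type*} [Fintype n] [DecidableEq n]
    [Field 𝕜] [LinearOrder 𝕜] [IsStrictOrderedRing 𝕜] {A : Matrix n n 𝕜} (hA : IsUnit A.det)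
    (hAinv : ∀ i j, A⁻¹ i j ≤ 0) {w : n → 𝕜} (hwA : 0 ≤ w ᵥ* A) : w ≤ 0 := by
  have hw : w = (w ᵥ* A) ᵥ* A⁻¹ := by rw [vecMul_vecMul, mul_nonsing_inv _ hA, vecMul_one]
  intro j
  rw [hw]
  exact Finset.sum_nonpos fun i _ => mul_nonpos_of_nonneg_of_nonpos (hwA i) (hAinv i j)

theorem stmt_12_general (n : ℕ) (A : Matrix (Fin n) (Fin n) ℝ)
    (hAinv : IsUnit A.det)
    (hAneg : ∀ i j, A⁻¹ i j ≤ 0)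
    (b c : Fin n → ℝ) (hc : ∀ i, c i ≤ 0)
    (M : Matrix (Fin n ⊕ Fin 1) (Fin n ⊕ Fin 1) ℝ)
    (hM : M = Matrix.fromBlocks A (fun i _ => b i) (fun _ j => c j) 0)
    (w : Fin n → ℝ) (lam : ℝ) (y : Fin n ⊕ Fin 1 → ℝ)
    (hy : y = Sum.elim w (fun _ => lam))
    (hynn : ∀ i, 0 ≤ y i) (hyne : y ≠ 0)
    (hMty : ∀ i, 0 ≤ (Mᵀ *ᵥ y) i) :
    c = 0 := by
  subst hM hy
  have hw : 0 ≤ w := fun i => hynn (Sum.inl i)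
  have hlam : 0 ≤ lam := hynn (Sum.inr 0)
  have hMty_inl (i : Fin n) : 0 ≤ (w ᵥ* A) i + lam * c i := by
    simpa [mulVec_transpose, vecMul, dotProduct, fromBlocks] using hMty (Sum.inl i)
  have hwA : 0 ≤ w ᵥ* A := fun i =>
    show 0 ≤ (w ᵥ* A) i by linarith [hMty_inl i, mul_nonpos_of_nonneg_of_nonpos hlam (hc i)]
  have hw0 : w = 0 := le_antisymm (nonpos_of_vecMul_nonneg_of_inv_nonpos hAinv hAneg hwA) hw
  have hlam_pos : 0 < lam := by
    refine hlam.lt_of_ne fun h => hyne ?_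
    ext (i | i) <;> simp [hw0, ← h]
  funext i
  have hci : 0 ≤ lam * c i := by simpa [hw0] using hMty_inl i
  exact le_antisymm (hc i) (nonneg_of_mul_nonneg_right hci hlam_pos)

/-- For `M = [[A, b],[cᵀ, 0]]` with `A⁻¹ ≤ 0`, `b, c ≤ 0`: if there is a nonzero
`y = (w, λ) ≥ 0` with `Mᵀ y ≥ 0`, then `c = 0`. -/
theorem stmt_12 (n : ℕ) (A : Matrix (Fin n) (Fin n) ℝ)
    (hAinv : IsUnit A.det)
    (hAneg : ∀ i j, A⁻¹ i j ≤ 0)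
    (b c : Fin n → ℝ) (hb : ∀ i, b i ≤ 0) (hc : ∀ i, c i ≤ 0)
    (M : Matrix (Fin n ⊕ Fin 1) (Fin n ⊕ Fin 1) ℝ)
    (hM : M = Matrix.fromBlocks A (fun i _ => b i) (fun _ j => c j) 0)
    (w : Fin n → ℝ) (lam : ℝ) (y : Fin n ⊕ Fin 1 → ℝ)
    (hy : y = Sum.elim w (fun _ => lam))
    (hynn : ∀ i, 0 ≤ y i) (hyne : y ≠ 0)
    (hMty : ∀ i, 0 ≤ (Mᵀ *ᵥ y) i) :
    c = 0 :=
  stmt_12_general n A hAinv hAneg b c hc M hM w lam y hy hynn hyne hMty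
end

section
/- The 3×3 matrix M = [[0,−1,−1],[−1,0,−1],[0,0,0]] is such that −M is not a Q₀-matrix: for q = (−1,1,1)ᵀ, LCP(−M, q) is feasible (x⁰ = (1,1,0)ᵀ satisfies x⁰ ≥ 0 and −Mx⁰ + q ≥ 0) but has no solution u ≥ 0 with v := −Mu + q ≥ 0 and uᵀv = 0. -/
open Matrix

/-- For `M = [[0,−1,−1],[−1,0,−1],[0,0,0]]` and `q = (−1,1,1)`, the problem
`LCP(−M, q)` is feasible (witnessed by `x⁰ = (1,1,0)`) but has no solution;
hence `−M` is not a Q₀-matrix. -/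
theorem stmt_14 (M : Matrix (Fin 3) (Fin 3) ℝ) (q : Fin 3 → ℝ)
    (hM : M = !![0, -1, -1; -1, 0, -1; 0, 0, 0])
    (hq : q = ![-1, 1, 1]) :
    ((∀ i, (0:ℝ) ≤ ![1, 1, 0] i) ∧ (∀ i, 0 ≤ ((-M) *ᵥ ![1, 1, 0] + q) i)) ∧
    ¬ ∃ u : Fin 3 → ℝ, (∀ i, 0 ≤ u i) ∧ (∀ i, 0 ≤ ((-M) *ᵥ u + q) i) ∧
      u ⬝ᵥ ((-M) *ᵥ u + q) = 0 := by
  subst hM hq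
  constructor
  · constructor
    · intro i; fin_cases i <;> norm_num
    · intro i; fin_cases i <;>
        simp [mulVec, dotProduct, Fin.sum_univ_succ]
  · rintro ⟨u, hu, hv, hdot⟩
    have h0 := hu 0; have h1 := hu 1; have h2 := hu 2
    have g0 := hv 0; have g1 := hv 1; have g2 := hv 2
    simp [mulVec, dotProduct, Fin.sum_univ_succ] at g0 g1 g2 hdot
    nlinarith [mul_nonneg h0 h1, mul_nonneg h0 h2, mul_nonneg h1 h2, mul_nonneg h1 h0]
end

section
/- Let A = α₀I + α₁P + α₂P² be a 3×3 real circulant matrix with α₀ + α₁ + α₂ = −1, and write a + ib = α₀ + α₁ω + α₂ω², where ω = e^{2πi/3}. Then α₀ ≥ 0, α₁ < 0, α₂ < 0 and α₀² < α₁α₂ hold if and only if a > −1 + √3·|b|, a ≥ 1/2, and (a−1)² + b² < 1. -/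
open Matrix

/-- Characterization of 3×3 circulant F₀-matrices in `C^(−1)`: with
`α₀ + α₁ + α₂ = −1`, `a = −1 − (3/2)(α₁+α₂)`, `b = (√3/2)(α₁−α₂)`,
we have `α₀ ≥ 0 ∧ α₁ < 0 ∧ α₂ < 0 ∧ α₀² < α₁α₂` iff
`a > −1 + √3|b| ∧ a ≥ 1/2 ∧ (a−1)² + b² < 1`. -/
theorem stmt_15 (α₀ α₁ α₂ a b : ℝ)
    (hsum : α₀ + α₁ + α₂ = -1)
    (ha : a = -1 - (3 / 2) * (α₁ + α₂))
    (hb : b = (Real.sqrt 3 / 2) * (α₁ - α₂)) :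
    (0 ≤ α₀ ∧ α₁ < 0 ∧ α₂ < 0 ∧ α₀ ^ 2 < α₁ * α₂) ↔
    (a > -1 + Real.sqrt 3 * |b| ∧ a ≥ 1 / 2 ∧ (a - 1) ^ 2 + b ^ 2 < 1) := by
  have h3 : Real.sqrt 3 ^ 2 = 3 := Real.sq_sqrt (by norm_num)
  have h3p : (0:ℝ) < Real.sqrt 3 := Real.sqrt_pos.mpr (by norm_num)
  subst ha hb
  constructor
  · rintro ⟨h0, h1, h2, h4⟩
    refine ⟨?_, by linarith, ?_⟩
    · rcases abs_cases ((Real.sqrt 3 / 2) * (α₁ - α₂)) with ⟨h, _⟩ | ⟨h, _⟩ <;>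
        rw [h] <;> nlinarith
    · nlinarith
  · rintro ⟨h, h0, h4⟩
    rcases abs_cases ((Real.sqrt 3 / 2) * (α₁ - α₂)) with ⟨hh, _⟩ | ⟨hh, _⟩ <;>
      rw [hh] at h <;>
      refine ⟨by linarith, by nlinarith, by nlinarith, by nlinarith⟩
end

section
/- Let α₀, α₁, α₂ ∈ ℝ with α₀ + α₁ + α₂ = 1 and set a = 1 − (3/2)(α₁+α₂), b = (√3/2)(α₁−α₂). Then α₂² − α₀α₁ ≤ 0 and α₁² − α₀α₂ ≤ 0 hold if and only if (a−1/2)² + (b−√3/2)² ≤ 1 and (a−1/2)² + (b+√3/2)² ≤ 1. -/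
/-- Characterization of inverse M-matrices among 3×3 circulants in `C^(1)`:
with `α₀ + α₁ + α₂ = 1`, `a = 1 − (3/2)(α₁+α₂)`, `b = (√3/2)(α₁−α₂)`,
we have `α₂² − α₀α₁ ≤ 0 ∧ α₁² − α₀α₂ ≤ 0` iff
`(a−1/2)² + (b−√3/2)² ≤ 1 ∧ (a−1/2)² + (b+√3/2)² ≤ 1`. -/
theorem stmt_17 (α₀ α₁ α₂ a b : ℝ)
    (hsum : α₀ + α₁ + α₂ = 1)
    (ha : a = 1 - (3 / 2) * (α₁ + α₂))
    (hb : b = (Real.sqrt 3 / 2) * (α₁ - α₂)) :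
    (α₂ ^ 2 - α₀ * α₁ ≤ 0 ∧ α₁ ^ 2 - α₀ * α₂ ≤ 0) ↔
    ((a - 1 / 2) ^ 2 + (b - Real.sqrt 3 / 2) ^ 2 ≤ 1 ∧
     (a - 1 / 2) ^ 2 + (b + Real.sqrt 3 / 2) ^ 2 ≤ 1) := by
  have h3 : Real.sqrt 3 ^ 2 = 3 := Real.sq_sqrt (by norm_num)
  have e1 : (a - 1 / 2) ^ 2 + (b - Real.sqrt 3 / 2) ^ 2 - 1 =
      3 * (α₂ ^ 2 - α₀ * α₁) := by
    subst ha hb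
    have hα : α₀ = 1 - α₁ - α₂ := by linarith
    subst hα
    linear_combination ((α₁ - α₂ - 1) ^ 2 / 4) * h3
  have e2 : (a - 1 / 2) ^ 2 + (b + Real.sqrt 3 / 2) ^ 2 - 1 =
      3 * (α₁ ^ 2 - α₀ * α₂) := by
    subst ha hb
    have hα : α₀ = 1 - α₁ - α₂ := by linarith
    subst hα
    linear_combination ((α₁ - α₂ + 1) ^ 2 / 4) * h3
  constructor
  · rintro ⟨h1, h2⟩
    constructor <;> nlinarith
  · rintro ⟨h1, h2⟩
    constructor <;> nlinarith
end
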